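/- Let n ≥ 2, let a, h be reals with a - h(n-1) = 1 and a + h > 0, and let r, m be nonzero reals satisfying (na-1)/(n²-1) ≤ (m/r)² ≤ (na-1)(n+1)/(n-1). Then the quantity δ = ((na-1)r² + m²)^(n/2) / (2^n · n^(n/2) · (a+h)^((n-1)/2) · |m r^(n-1)|) satisfies 1/2^n ≤ δ ≤ 1/(2^(n/2) √(n+1)). -/

import Mathlib

/-!
Put `b = a + h`, so that `n a - 1 = (n - 1) b`, and `s = (m / r)² / b`. The hypotheses say exactly
that `s ∈ [1 / (n + 1), n + 1]`, and `(2ⁿ δ)² = (n - 1 + s)ⁿ / (nⁿ s)`. The lower bound is AM-GM,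
`nⁿ s ≤ (n - 1 + s)ⁿ`. For the upper bound `(n + 1) (n - 1 + s)ⁿ ≤ (2n)ⁿ s`, the right side is affine
in `z = n - 1 + s ∈ [n² / (n + 1), 2n]` and `z ↦ zⁿ` is convex, so it suffices to check the two
endpoints: at `z = 2n` there is equality, and at `z = n² / (n + 1)` the inequality reduces to
`nⁿ (n + 1)² ≤ 2ⁿ (n + 1)ⁿ`.
-/

open Set

theorem ConvexOn.le_affine_of_mem_Icc {s : Set ℝ} {f : ℝ → ℝ} (hf : ConvexOn ℝ s f)
    {x y z c d : ℝ} (hx : x ∈ s) (hy : y ∈ s) (hz : z ∈ Icc x y)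
    (hfx : f x ≤ c * x + d) (hfy : f y ≤ c * y + d) : f z ≤ c * z + d := by
  rw [← segment_eq_Icc (hz.1.trans hz.2)] at hz
  obtain ⟨α, β, hα, hβ, hαβ, rfl⟩ := hz
  calc f (α • x + β • y) ≤ α • f x + β • f y := hf.2 hx hy hα hβ hαβ
    _ ≤ α * (c * x + d) + β * (c * y + d) := by simp only [smul_eq_mul]; gcongr
    _ = c * (α • x + β • y) + d := by simp only [smul_eq_mul]; linear_combination d * hαβ

theorem Real.rpow_div_two_sq {x : ℝ} (hx : 0 ≤ x) (y : ℝ) : (x ^ (y / 2)) ^ 2 = x ^ y := by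
  rw [← Real.rpow_natCast, ← Real.rpow_mul hx]
  norm_num

theorem pow_mul_le_sub_one_add_pow {n : ℕ} (hn : n ≠ 0) {s : ℝ} (hs : 0 ≤ s) :
    (n : ℝ) ^ n * s ≤ ((n : ℝ) - 1 + s) ^ n := by
  have hN : (1 : ℝ) ≤ n := by exact_mod_cast Nat.one_le_iff_ne_zero.mpr hn
  have hu : (-2 : ℝ) ≤ (s - 1) / n := by
    rw [le_div_iff₀ (by positivity)]
    linarith
  calc (n : ℝ) ^ n * s = n ^ n * (1 + n * ((s - 1) / n)) := by field_simp; ring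
    _ ≤ n ^ n * (1 + (s - 1) / n) ^ n := by gcongr; exact one_add_mul_le_pow hu n
    _ = ((n : ℝ) - 1 + s) ^ n := by rw [← mul_pow]; field_simp; ring

theorem Nat.succ_sq_le_two_pow_succ {n : ℕ} (hn : 3 ≤ n) : (n + 1) ^ 2 ≤ 2 ^ (n + 1) := by
  induction n, hn using Nat.le_induction with
  | base => norm_num
  | succ n hn ih =>
    calc (n + 1 + 1) ^ 2 ≤ 2 * (n + 1) ^ 2 := by nlinarith
      _ ≤ 2 ^ (n + 1 + 1) := by rw [pow_succ 2 (n + 1)]; omega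

theorem pow_mul_add_one_sq_le {n : ℕ} (hn : 2 ≤ n) :
    (n : ℝ) ^ n * (n + 1) ^ 2 ≤ (2 * (n + 1)) ^ n := by
  obtain rfl | hn3 := hn.eq_or_lt
  · norm_num
  have hsq : ((n : ℝ) + 1) ^ 2 ≤ 2 ^ (n + 1) := by
    exact_mod_cast Nat.succ_sq_le_two_pow_succ hn3
  have htwo : 2 * (n : ℝ) ^ n ≤ (n + 1) ^ n := by
    have := pow_mul_le_sub_one_add_pow (by omega : n ≠ 0) zero_le_two
    rwa [mul_comm, show (n : ℝ) - 1 + 2 = n + 1 by ring] at this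
  calc (n : ℝ) ^ n * (n + 1) ^ 2 ≤ n ^ n * 2 ^ (n + 1) := by gcongr
    _ = 2 ^ n * (2 * n ^ n) := by ring
    _ ≤ 2 ^ n * (n + 1) ^ n := by gcongr
    _ = (2 * (n + 1)) ^ n := (mul_pow _ _ _).symm

theorem add_one_mul_sub_one_add_pow_le {n : ℕ} (hn : 2 ≤ n) {s : ℝ}
    (hs : s ∈ Icc (1 / ((n : ℝ) + 1)) (n + 1)) :
    ((n : ℝ) + 1) * ((n : ℝ) - 1 + s) ^ n ≤ (2 * n) ^ n * s := by
  have hN : (2 : ℝ) ≤ n := by exact_mod_cast hn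
  have hN1 : (0 : ℝ) < n + 1 := by linarith
  obtain ⟨c, hc⟩ : ∃ c : ℝ, c * (n + 1) = (2 * n) ^ n := ⟨_, div_mul_cancel₀ _ hN1.ne'⟩
  have hz : (n : ℝ) - 1 + s ∈ Icc ((n : ℝ) ^ 2 / (n + 1)) (2 * (n : ℝ)) := by
    have hx : (n : ℝ) ^ 2 / (n + 1) = n - 1 + 1 / (n + 1) := by field_simp; ring
    exact ⟨by rw [hx]; linarith [hs.1], by linarith [hs.2]⟩
  -- the chord of `z ↦ z ^ n` over `[n ^ 2 / (n + 1), 2 * n]` is `z ↦ c * (z - (n - 1))`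
  have hleft : ((n : ℝ) ^ 2 / (n + 1)) ^ n ≤ c * (n ^ 2 / (n + 1)) + -c * (n - 1) := by
    rw [show c * ((n : ℝ) ^ 2 / (n + 1)) + -c * (n - 1) = (2 * n) ^ n / (n + 1) ^ 2 by
        rw [← hc]; field_simp; ring,
      div_pow, div_le_div_iff₀ (by positivity) (by positivity)]
    calc ((n : ℝ) ^ 2) ^ n * (n + 1) ^ 2 = (n : ℝ) ^ n * (n ^ n * (n + 1) ^ 2) := by ring
      _ ≤ (n : ℝ) ^ n * (2 * (n + 1)) ^ n := by gcongr; exact pow_mul_add_one_sq_le hn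
      _ = (2 * (n : ℝ)) ^ n * (n + 1) ^ n := by rw [mul_pow, mul_pow]; ring
  have hright : (2 * (n : ℝ)) ^ n ≤ c * (2 * n) + -c * (n - 1) :=
    le_of_eq (by linear_combination -hc)
  have hchord := (convexOn_pow n).le_affine_of_mem_Icc (mem_Ici.2 (by positivity))
    (mem_Ici.2 (by positivity)) hz hleft hright
  calc ((n : ℝ) + 1) * ((n : ℝ) - 1 + s) ^ n ≤ (n + 1) * (c * (n - 1 + s) + -c * (n - 1)) := by
        gcongr
    _ = (2 * n) ^ n * s := by linear_combination s * hc

theorem density_sq_eq {n : ℕ} (hn : n ≠ 0) {b r m s : ℝ} (hb : 0 < b) (hr : r ≠ 0)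
    (hs : 0 < s) (hm : m ^ 2 = s * (b * r ^ 2)) :
    ((((n : ℝ) - 1) * b * r ^ 2 + m ^ 2) ^ ((n : ℝ) / 2) /
      (2 ^ n * (n : ℝ) ^ ((n : ℝ) / 2) * b ^ (((n : ℝ) - 1) / 2) * |m * r ^ (n - 1)|)) ^ 2 =
      ((n : ℝ) - 1 + s) ^ n / ((n : ℝ) ^ n * s) / (2 ^ n) ^ 2 := by
  have hN : (1 : ℝ) ≤ n := by exact_mod_cast Nat.one_le_iff_ne_zero.mpr hn
  have hnum : ((n : ℝ) - 1) * b * r ^ 2 + m ^ 2 = b * r ^ 2 * (n - 1 + s) := by rw [hm]; ring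
  have hnum0 : 0 ≤ b * r ^ 2 * ((n : ℝ) - 1 + s) := by
    have : 0 ≤ (n : ℝ) - 1 + s := by linarith
    positivity
  rw [hnum, div_pow, mul_pow, mul_pow, mul_pow, Real.rpow_div_two_sq hnum0,
    Real.rpow_div_two_sq (Nat.cast_nonneg n), Real.rpow_div_two_sq hb.le, sq_abs, mul_pow, hm,
    Real.rpow_natCast, Real.rpow_natCast, Real.rpow_sub_one hb.ne', Real.rpow_natCast,
    pow_sub₀ r hr (Nat.one_le_iff_ne_zero.mpr hn), mul_pow, mul_pow]
  field_simp
  ring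

theorem stmt_6 (n : ℕ) (hn : 2 ≤ n) (a h : ℝ)
    (hah : a - h * (n - 1) = 1) (hpos : a + h > 0)
    (r m : ℝ) (hr : r ≠ 0)
    (hlow : (n * a - 1) / ((n : ℝ) ^ 2 - 1) ≤ (m / r) ^ 2)
    (hhigh : (m / r) ^ 2 ≤ (n * a - 1) * (n + 1) / (n - 1))
    (δ : ℝ)
    (hδ : δ = ((n * a - 1) * r ^ 2 + m ^ 2) ^ ((n : ℝ) / 2) /
      (2 ^ n * (n : ℝ) ^ ((n : ℝ) / 2) * (a + h) ^ (((n : ℝ) - 1) / 2) * |m * r ^ (n - 1)|)) :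
    1 / 2 ^ n ≤ δ ∧ δ ≤ 1 / (2 ^ ((n : ℝ) / 2) * Real.sqrt (n + 1)) := by
  have hN : (2 : ℝ) ≤ n := by exact_mod_cast hn
  have hna : (n : ℝ) * a - 1 = ((n : ℝ) - 1) * (a + h) := by linear_combination hah
  set s := (m / r) ^ 2 / (a + h)
  have hs : s ∈ Icc (1 / ((n : ℝ) + 1)) (n + 1) := by
    rw [hna, show (n : ℝ) ^ 2 - 1 = (n - 1) * (n + 1) by ring,
      mul_div_mul_left _ _ (by linarith)] at hlow
    rw [hna, mul_assoc, mul_div_cancel_left₀ _ (by linarith)] at hhigh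
    constructor
    · rw [le_div_iff₀ hpos, one_div_mul_eq_div]; exact hlow
    · rw [div_le_iff₀ hpos]; linarith
  have hs0 : 0 < s := lt_of_lt_of_le (by positivity) hs.1
  have hm : m ^ 2 = s * ((a + h) * r ^ 2) := by simp only [s]; field_simp
  have hδ0 : 0 ≤ δ := by
    rw [hδ, hna]
    have : 0 ≤ ((n : ℝ) - 1) * (a + h) := mul_nonneg (by linarith) hpos.le
    positivity
  have hδsq : δ ^ 2 = ((n : ℝ) - 1 + s) ^ n / ((n : ℝ) ^ n * s) / (2 ^ n) ^ 2 := by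
    rw [hδ, hna]; exact density_sq_eq (by omega) hpos hr hs0 hm
  constructor
  · rw [← pow_le_pow_iff_left₀ (by positivity) hδ0 two_ne_zero, hδsq, div_pow, one_pow]
    gcongr
    rw [one_le_div (by positivity)]
    exact pow_mul_le_sub_one_add_pow (by omega) hs0.le
  · rw [← pow_le_pow_iff_left₀ hδ0 (by positivity) two_ne_zero, hδsq, div_pow, one_pow, mul_pow,
      Real.rpow_div_two_sq zero_le_two, Real.sq_sqrt (by positivity), Real.rpow_natCast, div_div,
      div_le_div_iff₀ (by positivity) (by positivity)]
    calc ((n : ℝ) - 1 + s) ^ n * (2 ^ n * (n + 1)) = 2 ^ n * ((n + 1) * (n - 1 + s) ^ n) := by ring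
      _ ≤ 2 ^ n * ((2 * n) ^ n * s) :=
        mul_le_mul_of_nonneg_left (add_one_mul_sub_one_add_pow_le hn hs) (by positivity)
      _ = 1 * ((n : ℝ) ^ n * s * (2 ^ n) ^ 2) := by rw [mul_pow]; ring
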